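/- Let K be a probability density on ℝ^d with ∫ y K(y) dy = 0 and second-moment matrix m₂(K) I_d, and let f : ℝ^d → ℝ be C² with bounded uniformly continuous Hessian. Then for fixed y and symmetric positive definite bandwidth matrices H → 0, ∫ K(w) f(y − H^{1/2} w) dw − f(y) = (1/2) m₂(K) tr(H · Hess f(y)) + o(tr H). -/

import Mathlib

/-!
Write `ρ(v) = f(y + v) - f y - Df(y) v - ½ D²f(y) v v` for the second-order Taylor remainder
at `y`, and `A = H^{1/2}`. Since `K` has mean zero and second moments `m₂ I`, the linear term
integrates to zero and the quadratic one to `½ m₂ tr(Aᵀ Hess f(y) A) = ½ m₂ tr(H Hess f(y))`, so the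
bias error is exactly `∫ K(w) ρ(-A w) dw`. By Cauchy–Schwarz `‖A w‖² ≤ tr(A Aᵀ) |w|² = tr H |w|²`.
Taylor's theorem gives `ρ(v) = o(‖v‖²)` (continuity of `D²f` at `y`) and `|ρ(v)| ≤ C ‖v‖²`
(boundedness of the Hessian), so `K(w) ρ(-A w) / tr H` tends to `0` pointwise and is dominated by
`C |K(w)| |w|²`, which is integrable; dominated convergence concludes.
-/

open MeasureTheory Matrix Filter Asymptotics
open scoped Topology BigOperators

/-- The Hessian matrix of `f : ℝ^d → ℝ` at `y`, with entries the second partial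
derivatives `∂ᵢ∂ⱼ f(y)`. -/
noncomputable def hessianMatrix {d : ℕ} (f : (Fin d → ℝ) → ℝ) (y : Fin d → ℝ) :
    Matrix (Fin d) (Fin d) ℝ :=
  Matrix.of fun i j =>
    fderiv ℝ (fun x => fderiv ℝ f x (Pi.single j 1)) y (Pi.single i 1)

section Taylor

open Set

variable {E : Type*} [NormedAddCommGroup E] [NormedSpace ℝ E] {f : E → ℝ}

noncomputable def taylorRemainder₂ (f : E → ℝ) (y v : E) : ℝ :=
  f (y + v) - f y - fderiv ℝ f y v - (1 / 2) * fderiv ℝ (fderiv ℝ f) y v v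

theorem continuous_taylorRemainder₂ (hf : Continuous f) (y : E) :
    Continuous (taylorRemainder₂ f y) := by
  unfold taylorRemainder₂
  fun_prop

theorem hasDerivAt_comp_add_smul {F : Type*} [NormedAddCommGroup F] [NormedSpace ℝ F]
    {g : E → F} {y v : E} {t : ℝ} (hg : DifferentiableAt ℝ g (y + t • v)) :
    HasDerivAt (fun s : ℝ => g (y + s • v)) (fderiv ℝ g (y + t • v) v) t := by
  have hline : HasDerivAt (fun s : ℝ => y + s • v) v t := by
    simpa using ((hasDerivAt_id t).smul_const v).const_add y
  exact hg.hasFDerivAt.comp_hasDerivAt t hline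

theorem exists_taylorRemainder₂_eq (hf : ContDiff ℝ 2 f) (y v : E) :
    ∃ c ∈ Ioo (0 : ℝ) 1, taylorRemainder₂ f y v =
      (1 / 2) * (fderiv ℝ (fderiv ℝ f) (y + c • v) - fderiv ℝ (fderiv ℝ f) y) v v := by
  have hDf : Differentiable ℝ (fderiv ℝ f) :=
    (hf.fderiv_right (m := 1) le_rfl).differentiable one_ne_zero
  set g : ℝ → ℝ := fun t => f (y + t • v)
  have hg' : deriv g = fun t => fderiv ℝ f (y + t • v) v := funext fun t =>
    (hasDerivAt_comp_add_smul ((hf.differentiable two_ne_zero) _)).deriv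
  have hg'' (t : ℝ) : deriv (deriv g) t = fderiv ℝ (fderiv ℝ f) (y + t • v) v v := by
    rw [hg', (hasDerivAt_comp_add_smul ((hDf _).clm_apply (differentiableAt_const v))).deriv,
      fderiv_clm_apply (hDf _) (differentiableAt_const v)]
    simp
  have hgC : ContDiff ℝ 2 g := hf.comp (contDiff_const.add (contDiff_id.smul contDiff_const))
  obtain ⟨c, hc, hT⟩ :=
    taylor_mean_remainder_lagrange_iteratedDeriv (n := 1) zero_ne_one hgC.contDiffOn
  rw [uIoo_of_le zero_le_one] at hc
  refine ⟨c, hc, ?_⟩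
  have hg'0 : iteratedDerivWithin 1 g (uIcc 0 1) 0 = deriv g 0 := by
    rw [iteratedDerivWithin_one]
    exact ((hgC.differentiable two_ne_zero) 0).derivWithin
      ((uniqueDiffOn_uIcc zero_ne_one) 0 left_mem_uIcc)
  rw [taylorWithinEval_succ, taylor_within_zero_eval, hg'0, iteratedDeriv_succ,
    iteratedDeriv_one, hg'' c, hg'] at hT
  simp only [g] at hT
  simp only [taylorRemainder₂, _root_.sub_apply]
  norm_num at hT
  linarith

theorem abs_taylorRemainder₂_le (hf : ContDiff ℝ 2 f) {y v : E} {M : ℝ}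
    (hM : ∀ z ∈ Metric.closedBall y ‖v‖,
      ‖fderiv ℝ (fderiv ℝ f) z - fderiv ℝ (fderiv ℝ f) y‖ ≤ M) :
    |taylorRemainder₂ f y v| ≤ (1 / 2) * M * ‖v‖ ^ 2 := by
  obtain ⟨c, hc, hρ⟩ := exists_taylorRemainder₂_eq hf y v
  have hz : y + c • v ∈ Metric.closedBall y ‖v‖ := by
    rw [mem_closedBall_iff_norm, add_sub_cancel_left, norm_smul, Real.norm_of_nonneg hc.1.le]
    exact mul_le_of_le_one_left (norm_nonneg v) hc.2.le
  rw [hρ, abs_mul, abs_of_pos one_half_pos, mul_assoc, ← Real.norm_eq_abs]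
  gcongr
  calc _ ≤ ‖fderiv ℝ (fderiv ℝ f) (y + c • v) - fderiv ℝ (fderiv ℝ f) y‖ * ‖v‖ * ‖v‖ :=
        ContinuousLinearMap.le_opNorm₂ _ v v
    _ ≤ M * ‖v‖ ^ 2 := by rw [mul_assoc, ← sq]; gcongr; exact hM _ hz

theorem isLittleO_taylorRemainder₂ (hf : ContDiff ℝ 2 f) (y : E) :
    taylorRemainder₂ f y =o[𝓝 0] fun v => ‖v‖ ^ 2 := by
  refine isLittleO_iff.2 fun ε hε => ?_
  have hcont : ContinuousAt (fderiv ℝ (fderiv ℝ f)) y :=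
    ((hf.fderiv_right (m := 1) le_rfl).continuous_fderiv one_ne_zero).continuousAt
  obtain ⟨δ, hδ, hD⟩ := (Metric.continuousAt_iff (β := E →L[ℝ] E →L[ℝ] ℝ)).1 hcont
    (2 * ε) (by positivity)
  filter_upwards [Metric.ball_mem_nhds (0 : E) hδ] with v hv
  have hρ := abs_taylorRemainder₂_le (M := 2 * ε) hf (y := y) (v := v) fun z hz =>
    (dist_eq_norm (fderiv ℝ (fderiv ℝ f) z) _ ▸ hD (hz.trans_lt (mem_ball_zero_iff.1 hv))).le
  rw [Real.norm_eq_abs, norm_pow, norm_norm]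
  linarith

theorem abs_taylorRemainder₂_le_of_forall_norm_le (hf : ContDiff ℝ 2 f) {C : ℝ}
    (hC : ∀ z, ‖fderiv ℝ (fderiv ℝ f) z‖ ≤ C) (y v : E) :
    |taylorRemainder₂ f y v| ≤ C * ‖v‖ ^ 2 :=
  (abs_taylorRemainder₂_le (M := C + C) hf fun z _ =>
    (norm_sub_le (fderiv ℝ (fderiv ℝ f) z) _).trans (add_le_add (hC z) (hC y))).trans_eq
      (by ring)

end Taylor

section Matrix

variable {m n : Type*} [Fintype m] [Fintype n]

theorem abs_dotProduct_mulVec_le {M : Matrix m n ℝ} {C : ℝ} (hM : ∀ i j, |M i j| ≤ C)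
    (u : m → ℝ) (v : n → ℝ) :
    |u ⬝ᵥ (M *ᵥ v)| ≤ Fintype.card m * Fintype.card n * C * ‖u‖ * ‖v‖ := by
  have hexp : u ⬝ᵥ (M *ᵥ v) = ∑ i, ∑ j, u i * M i j * v j := by
    simp only [dotProduct, mulVec, Finset.mul_sum, mul_assoc]
  rw [hexp]
  calc |∑ i, ∑ j, u i * M i j * v j| ≤ ∑ i, ∑ j, |u i * M i j * v j| :=
        (Finset.abs_sum_le_sum_abs _ _).trans
          (Finset.sum_le_sum fun i _ => Finset.abs_sum_le_sum_abs _ _)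
    _ ≤ ∑ _i : m, ∑ _j : n, ‖u‖ * C * ‖v‖ := by
        gcongr with i _ j _
        rw [abs_mul, abs_mul]
        have hC : 0 ≤ C := (abs_nonneg _).trans (hM i j)
        gcongr
        exacts [norm_le_pi_norm u i, hM i j, norm_le_pi_norm v j]
    _ = Fintype.card m * Fintype.card n * C * ‖u‖ * ‖v‖ := by
        simp only [Finset.sum_const, Finset.card_univ, nsmul_eq_mul]; ring

theorem norm_mulVec_sq_le (A : Matrix m n ℝ) (w : n → ℝ) :
    ‖A *ᵥ w‖ ^ 2 ≤ (A * Aᵀ).trace * (w ⬝ᵥ w) := by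
  have htr : (A * Aᵀ).trace = ∑ i, ∑ j, A i j ^ 2 := by
    simp only [trace, diag, mul_apply, transpose_apply, sq]
  have hww : w ⬝ᵥ w = ∑ j, w j ^ 2 := by simp only [dotProduct, sq]
  have hrow (k : m) : ∑ j, A k j ^ 2 ≤ (A * Aᵀ).trace := by
    rw [htr]
    exact Finset.single_le_sum (f := fun i => ∑ j, A i j ^ 2)
      (fun i _ => Finset.sum_nonneg fun j _ => sq_nonneg _) (Finset.mem_univ k)
  have hentry (k : m) : (A *ᵥ w) k ^ 2 ≤ (A * Aᵀ).trace * (w ⬝ᵥ w) := by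
    rw [hww]
    exact (Finset.sum_mul_sq_le_sq_mul_sq _ _ _).trans
      (mul_le_mul_of_nonneg_right (hrow k) (Finset.sum_nonneg fun j _ => sq_nonneg _))
  have hnorm : ‖A *ᵥ w‖ ≤ √((A * Aᵀ).trace * (w ⬝ᵥ w)) := by
    refine (pi_norm_le_iff_of_nonneg (Real.sqrt_nonneg _)).2 fun k => ?_
    rw [Real.norm_eq_abs]
    exact Real.abs_le_sqrt (hentry k)
  calc ‖A *ᵥ w‖ ^ 2 ≤ √((A * Aᵀ).trace * (w ⬝ᵥ w)) ^ 2 := by gcongr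
    _ = (A * Aᵀ).trace * (w ⬝ᵥ w) := Real.sq_sqrt (by rw [htr, hww]; positivity)

theorem mulVec_dotProduct_mulVec_mulVec (A : Matrix m n ℝ) (M : Matrix m m ℝ) (w : n → ℝ) :
    (A *ᵥ w) ⬝ᵥ (M *ᵥ (A *ᵥ w)) = w ⬝ᵥ ((Aᵀ * M * A) *ᵥ w) := by
  rw [← mulVec_mulVec, ← mulVec_mulVec, dotProduct_mulVec w, vecMul_transpose]

end Matrix

section Hessian

variable {d : ℕ} {f : (Fin d → ℝ) → ℝ} {x : Fin d → ℝ}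

theorem hessianMatrix_eq_toMatrix₂' (hf : DifferentiableAt ℝ (fderiv ℝ f) x) :
    hessianMatrix f x = LinearMap.toMatrix₂' ℝ (fderiv ℝ (fderiv ℝ f) x).toLinearMap₁₂ := by
  ext i j
  rw [LinearMap.toMatrix₂'_apply, hessianMatrix, of_apply,
    fderiv_clm_apply hf (differentiableAt_const _)]
  simp

theorem fderiv_fderiv_apply_eq_dotProduct_hessianMatrix
    (hf : DifferentiableAt ℝ (fderiv ℝ f) x) (u v : Fin d → ℝ) :
    fderiv ℝ (fderiv ℝ f) x u v = u ⬝ᵥ (hessianMatrix f x *ᵥ v) := by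
  rw [hessianMatrix_eq_toMatrix₂' hf, ← toLinearMap₂'_apply', toLinearMap₂'_toMatrix']
  rfl

theorem norm_fderiv_fderiv_le_of_abs_hessianMatrix_le (hf : DifferentiableAt ℝ (fderiv ℝ f) x)
    {C : ℝ} (hC₀ : 0 ≤ C) (hC : ∀ i j, |hessianMatrix f x i j| ≤ C) :
    ‖fderiv ℝ (fderiv ℝ f) x‖ ≤ d ^ 2 * C := by
  refine ContinuousLinearMap.opNorm_le_bound₂ _ (by positivity) fun u v => ?_
  rw [fderiv_fderiv_apply_eq_dotProduct_hessianMatrix hf, Real.norm_eq_abs]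
  simpa [sq] using abs_dotProduct_mulVec_le hC u v

theorem abs_taylorRemainder₂_le_of_abs_hessianMatrix_le (hf : ContDiff ℝ 2 f) {C : ℝ}
    (hC : ∀ z i j, |hessianMatrix f z i j| ≤ C) (y v : Fin d → ℝ) :
    |taylorRemainder₂ f y v| ≤ d ^ 2 * max C 0 * ‖v‖ ^ 2 :=
  abs_taylorRemainder₂_le_of_forall_norm_le hf (fun z =>
    norm_fderiv_fderiv_le_of_abs_hessianMatrix_le
      (((hf.fderiv_right (m := 1) le_rfl).differentiable one_ne_zero) z) (le_max_right C 0)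
      fun i j => (hC z i j).trans (le_max_left C 0)) y v

end Hessian

section Moments

variable {ι : Type*} [Fintype ι] {μ : Measure (ι → ℝ)} {K : (ι → ℝ) → ℝ}

theorem mul_clm_eq_sum [DecidableEq ι] (L : (ι → ℝ) →L[ℝ] ℝ) (w : ι → ℝ) :
    K w * L w = ∑ i, L (Pi.single i 1) * (w i * K w) := by
  rw [← L.coe_coe, LinearMap.pi_apply_eq_sum_univ, Finset.mul_sum]
  refine Finset.sum_congr rfl fun i _ => ?_
  rw [show (fun j => if i = j then (1 : ℝ) else 0) = Pi.single i 1 by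
    ext j; simp [Pi.single_apply, eq_comm], smul_eq_mul]
  ring

theorem integrable_mul_clm (hK : ∀ i, Integrable (fun w : ι → ℝ => w i * K w) μ)
    (L : (ι → ℝ) →L[ℝ] ℝ) : Integrable (fun w => K w * L w) μ := by
  classical
  simp_rw [mul_clm_eq_sum L]
  exact integrable_finsetSum _ fun i _ => (hK i).const_mul _

theorem integral_mul_clm_eq_zero (hK : ∀ i, Integrable (fun w : ι → ℝ => w i * K w) μ)
    (hK_mean : ∀ i, ∫ w, w i * K w ∂μ = 0) (L : (ι → ℝ) →L[ℝ] ℝ) :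
    ∫ w, K w * L w ∂μ = 0 := by
  classical
  simp_rw [mul_clm_eq_sum L]
  rw [integral_finsetSum _ fun i _ => (hK i).const_mul _]
  simp [integral_const_mul, hK_mean]

theorem mul_dotProduct_mulVec_eq_sum (B : Matrix ι ι ℝ) (w : ι → ℝ) :
    K w * (w ⬝ᵥ (B *ᵥ w)) = ∑ i, ∑ j, B i j * (w i * w j * K w) := by
  simp only [dotProduct, mulVec, Finset.mul_sum]
  exact Finset.sum_congr rfl fun i _ => Finset.sum_congr rfl fun j _ => by ring

theorem integrable_mul_dotProduct_mulVec
    (hK : ∀ i j, Integrable (fun w : ι → ℝ => w i * w j * K w) μ) (B : Matrix ι ι ℝ) :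
    Integrable (fun w => K w * (w ⬝ᵥ (B *ᵥ w))) μ := by
  simp_rw [mul_dotProduct_mulVec_eq_sum B]
  exact integrable_finsetSum _ fun i _ => integrable_finsetSum _ fun j _ => (hK i j).const_mul _

theorem integral_mul_dotProduct_mulVec [DecidableEq ι] {m₂ : ℝ}
    (hK : ∀ i j, Integrable (fun w : ι → ℝ => w i * w j * K w) μ)
    (hK_mom : ∀ i j, ∫ w, w i * w j * K w ∂μ = if i = j then m₂ else 0) (B : Matrix ι ι ℝ) :
    ∫ w, K w * (w ⬝ᵥ (B *ᵥ w)) ∂μ = m₂ * B.trace := by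
  simp_rw [mul_dotProduct_mulVec_eq_sum B]
  have hint (i j : ι) :
      ∫ w, B i j * (w i * w j * K w) ∂μ = if i = j then B i j * m₂ else 0 := by
    rw [integral_const_mul, hK_mom]; split_ifs <;> simp
  rw [integral_finsetSum _ fun i _ => integrable_finsetSum _ fun j _ => (hK i j).const_mul (B i j)]
  simp_rw [integral_finsetSum _ fun j _ => (hK _ j).const_mul _, hint]
  simp [trace, Finset.mul_sum, mul_comm]

end Moments

theorem kernel_bias_eq_integral_taylorRemainder₂ {d : ℕ} {μ : Measure (Fin d → ℝ)}
    {K : (Fin d → ℝ) → ℝ} (hK_int : Integrable K μ) (hK_prob : ∫ w, K w ∂μ = 1)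
    (hK_mean_int : ∀ i, Integrable (fun w : Fin d → ℝ => w i * K w) μ)
    (hK_mean : ∀ i, ∫ w, w i * K w ∂μ = 0) {m₂ : ℝ}
    (hK_mom_int : ∀ i j, Integrable (fun w : Fin d → ℝ => w i * w j * K w) μ)
    (hK_mom : ∀ i j, ∫ w, w i * w j * K w ∂μ = if i = j then m₂ else 0)
    {f : (Fin d → ℝ) → ℝ} {y : Fin d → ℝ} (hf : DifferentiableAt ℝ (fderiv ℝ f) y)
    (A : Matrix (Fin d) (Fin d) ℝ)
    (hρ : Integrable (fun w => K w * taylorRemainder₂ f y (-(A *ᵥ w))) μ) :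
    ∫ w, K w * f (y - A *ᵥ w) ∂μ - f y - 1 / 2 * m₂ * (A * Aᵀ * hessianMatrix f y).trace =
      ∫ w, K w * taylorRemainder₂ f y (-(A *ᵥ w)) ∂μ := by
  set L := (fderiv ℝ f y).comp (LinearMap.toContinuousLinearMap (toLin' A))
  set B := Aᵀ * hessianMatrix f y * A
  have hpt (w : Fin d → ℝ) : K w * f (y - A *ᵥ w) = K w * f y - K w * L w
      + 1 / 2 * (K w * (w ⬝ᵥ (B *ᵥ w))) + K w * taylorRemainder₂ f y (-(A *ᵥ w)) := by
    have hL : L w = fderiv ℝ f y (A *ᵥ w) := rfl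
    rw [taylorRemainder₂, fderiv_fderiv_apply_eq_dotProduct_hessianMatrix hf, hL,
      ← mulVec_dotProduct_mulVec_mulVec, ← sub_eq_add_neg, map_neg]
    simp only [mulVec_neg, neg_dotProduct, dotProduct_neg, neg_neg]
    ring
  have hlin : Integrable (fun w => K w * f y - K w * L w) μ :=
    (hK_int.mul_const _).sub (integrable_mul_clm hK_mean_int L)
  have hquad : Integrable (fun w => 1 / 2 * (K w * (w ⬝ᵥ (B *ᵥ w)))) μ :=
    (integrable_mul_dotProduct_mulVec hK_mom_int B).const_mul _
  have hsum : Integrable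
      (fun w => K w * f y - K w * L w + 1 / 2 * (K w * (w ⬝ᵥ (B *ᵥ w)))) μ := hlin.add hquad
  have hB : B.trace = (A * Aᵀ * hessianMatrix f y).trace := trace_mul_cycle _ _ _
  simp_rw [hpt]
  rw [integral_add hsum hρ, integral_add hlin hquad,
    integral_sub (hK_int.mul_const _) (integrable_mul_clm hK_mean_int L), integral_mul_const,
    integral_const_mul, integral_mul_clm_eq_zero hK_mean_int hK_mean,
    integral_mul_dotProduct_mulVec hK_mom_int hK_mom, hK_prob, hB]
  ring

section DominatedConvergence

variable {E ι : Type*} [NormedAddCommGroup E] {l : Filter ι} {ρ : E → ℝ}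

theorem tendsto_comp_div_of_isLittleO_sq (hρ : ρ =o[𝓝 0] fun v => ‖v‖ ^ 2) {v : ι → E}
    {t : ι → ℝ} {c : ℝ} (ht : Tendsto t l (𝓝 0)) (hvt : ∀ᶠ i in l, ‖v i‖ ^ 2 ≤ t i * c) :
    Tendsto (fun i => ρ (v i) / t i) l (𝓝 0) := by
  have hv : Tendsto v l (𝓝 0) := by
    refine squeeze_zero_norm' (hvt.mono fun i hi => ?_) (a := fun i => √(t i * c)) ?_
    · exact Real.le_sqrt_of_sq_le hi
    · simpa using (ht.mul_const c).sqrt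
  have hvt' : (fun i => ‖v i‖ ^ 2) =O[l] t := by
    refine IsBigO.of_bound |c| (hvt.mono fun i hi => ?_)
    rw [norm_pow, norm_norm, Real.norm_eq_abs, mul_comm]
    exact hi.trans ((le_abs_self _).trans_eq (abs_mul _ _))
  exact ((hρ.comp_tendsto hv).trans_isBigO hvt').tendsto_div_nhds_zero

theorem norm_mul_le_of_sq_le {C t k q : ℝ} {v : E} (hρ : |ρ v| ≤ C * ‖v‖ ^ 2) (hC : 0 ≤ C)
    (ht : 0 ≤ t) (hv : ‖v‖ ^ 2 ≤ t * q) : ‖k * ρ v‖ ≤ C * t * ‖k * q‖ := by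
  have hq : t * q ≤ t * |q| := mul_le_mul_of_nonneg_left (le_abs_self q) ht
  rw [norm_mul, norm_mul, Real.norm_eq_abs, Real.norm_eq_abs, Real.norm_eq_abs]
  calc |k| * |ρ v| ≤ |k| * (C * (t * |q|)) := by gcongr; exact hρ.trans (by gcongr; linarith)
    _ = C * t * (|k| * |q|) := by ring

variable {α : Type*} [MeasurableSpace α] {μ : Measure α} {K q : α → ℝ} {C : ℝ}

theorem integrable_mul_comp_of_sq_le (hKq : Integrable (fun w => K w * q w) μ)
    (hρC : ∀ v, |ρ v| ≤ C * ‖v‖ ^ 2) (hC : 0 ≤ C) {v : α → E} {t : ℝ} (ht : 0 ≤ t)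
    (hv : ∀ w, ‖v w‖ ^ 2 ≤ t * q w) (hmeas : AEStronglyMeasurable (fun w => K w * ρ (v w)) μ) :
    Integrable (fun w => K w * ρ (v w)) μ :=
  (hKq.norm.const_mul (C * t)).mono' hmeas
    (ae_of_all _ fun w => norm_mul_le_of_sq_le (hρC _) hC ht (hv w))

theorem isLittleO_integral_mul_comp [l.IsCountablyGenerated]
    (hKq : Integrable (fun w => K w * q w) μ) (hρ : ρ =o[𝓝 0] fun v => ‖v‖ ^ 2)
    (hρC : ∀ v, |ρ v| ≤ C * ‖v‖ ^ 2) (hC : 0 ≤ C) {v : ι → α → E} {t : ι → ℝ}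
    (ht : Tendsto t l (𝓝 0)) (hvt : ∀ᶠ i in l, 0 ≤ t i ∧ ∀ w, ‖v i w‖ ^ 2 ≤ t i * q w)
    (hmeas : ∀ᶠ i in l, AEStronglyMeasurable (fun w => K w * ρ (v i w)) μ) :
    (fun i => ∫ w, K w * ρ (v i w) ∂μ) =o[l] t := by
  have hρ0 : ρ 0 = 0 := abs_nonpos_iff.1 (by simpa using hρC 0)
  refine (isLittleO_iff_tendsto' (hvt.mono fun i hi hti => ?_)).2 ?_
  · refine integral_eq_zero_of_ae (ae_of_all _ fun w => ?_)
    have hvw : ‖v i w‖ ^ 2 ≤ 0 := by simpa [hti] using hi.2 w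
    simp [norm_eq_zero.1 (pow_eq_zero_iff two_ne_zero |>.1 (le_antisymm hvw (by positivity))), hρ0]
  simp_rw [← integral_div]
  have hlim (w : α) : Tendsto (fun i => K w * ρ (v i w) / t i) l (𝓝 0) := by
    simpa [mul_div_assoc] using
      (tendsto_comp_div_of_isLittleO_sq hρ ht (hvt.mono fun i hi => hi.2 w)).const_mul (K w)
  have hdom : ∀ᶠ i in l, ∀ᵐ w ∂μ, ‖K w * ρ (v i w) / t i‖ ≤ C * ‖K w * q w‖ :=
    hvt.mono fun i hi => ae_of_all _ fun w => by
      rw [norm_div, Real.norm_of_nonneg hi.1]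
      refine div_le_of_le_mul₀ hi.1 (by positivity) ?_
      simpa [mul_comm, mul_assoc, mul_left_comm] using
        norm_mul_le_of_sq_le (hρC _) hC hi.1 (hi.2 w)
  have hmeas' : ∀ᶠ i in l, AEStronglyMeasurable (fun w => K w * ρ (v i w) / t i) μ :=
    hmeas.mono fun i hi => by simpa only [div_eq_mul_inv] using hi.mul_const (t i)⁻¹
  simpa using tendsto_integral_filter_of_dominated_convergence _ hmeas' hdom
    (hKq.norm.const_mul C) (ae_of_all _ hlim)

end DominatedConvergence

theorem multivariate_kernel_bias_expansion_general
    (d : ℕ) (K : (Fin d → ℝ) → ℝ)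
    (hK_int : Integrable K) (hK_prob : ∫ w, K w = 1)
    (hK_mean_int : ∀ i : Fin d, Integrable fun w : Fin d → ℝ => w i * K w)
    (hK_mean : ∀ i : Fin d, (∫ w : Fin d → ℝ, w i * K w) = 0)
    (m₂ : ℝ)
    (hK_mom_int : ∀ i j : Fin d, Integrable fun w : Fin d → ℝ => w i * w j * K w)
    (hK_mom : ∀ i j : Fin d,
      (∫ w : Fin d → ℝ, w i * w j * K w) = if i = j then m₂ else 0)
    (f : (Fin d → ℝ) → ℝ) (hf : ContDiff ℝ 2 f)
    (hhess_bdd : ∃ C, ∀ y i j, |hessianMatrix f y i j| ≤ C)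
    (sq : Matrix (Fin d) (Fin d) ℝ → Matrix (Fin d) (Fin d) ℝ)
    (hsq : ∀ H : Matrix (Fin d) (Fin d) ℝ, H.PosDef →
      (sq H).PosSemidef ∧ sq H * sq H = H)
    (y : Fin d → ℝ) :
    (fun H : Matrix (Fin d) (Fin d) ℝ =>
        (∫ w : Fin d → ℝ, K w * f (y - (sq H).mulVec w)) - f y -
          (1 / 2) * m₂ * (H * hessianMatrix f y).trace)
      =o[𝓝[{H : Matrix (Fin d) (Fin d) ℝ | H.PosDef}] 0]
        fun H : Matrix (Fin d) (Fin d) ℝ => H.trace := by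
  obtain ⟨C, hC⟩ := hhess_bdd
  have hDf : Differentiable ℝ (fderiv ℝ f) :=
    (hf.fderiv_right (m := 1) le_rfl).differentiable one_ne_zero
  have hρC := abs_taylorRemainder₂_le_of_abs_hessianMatrix_le hf hC y
  have hKq : Integrable fun w : Fin d → ℝ => K w * (w ⬝ᵥ w) := by
    simpa using integrable_mul_dotProduct_mulVec hK_mom_int 1
  have hsq_transpose (H : Matrix (Fin d) (Fin d) ℝ) (hH : H.PosDef) : sq H * (sq H)ᵀ = H := by
    rw [← conjTranspose_eq_transpose_of_trivial, (hsq H hH).1.1.eq, (hsq H hH).2]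
  have hbound : ∀ᶠ H in 𝓝[{H : Matrix (Fin d) (Fin d) ℝ | H.PosDef}] 0,
      0 ≤ H.trace ∧ ∀ w, ‖-(sq H *ᵥ w)‖ ^ 2 ≤ H.trace * (w ⬝ᵥ w) :=
    eventually_nhdsWithin_of_forall fun H hH => ⟨hH.posSemidef.trace_nonneg, fun w => by
      simpa [norm_neg, hsq_transpose H hH] using norm_mulVec_sq_le (sq H) w⟩
  have hmeas (H : Matrix (Fin d) (Fin d) ℝ) :
      AEStronglyMeasurable (fun w => K w * taylorRemainder₂ f y (-(sq H *ᵥ w))) :=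
    hK_int.aestronglyMeasurable.mul ((continuous_taylorRemainder₂ hf.continuous y).comp
      (continuous_const.matrix_mulVec continuous_id).neg).aestronglyMeasurable
  have htr : Tendsto (fun H : Matrix (Fin d) (Fin d) ℝ => H.trace)
      (𝓝[{H : Matrix (Fin d) (Fin d) ℝ | H.PosDef}] 0) (𝓝 0) :=
    (continuous_id.matrix_trace.tendsto' 0 0 (trace_zero _ _)).mono_left nhdsWithin_le_nhds
  -- `Matrix` is a type synonym, so this instance of the function type is not found by itself.
  have : FirstCountableTopology (Matrix (Fin d) (Fin d) ℝ) :=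
    inferInstanceAs (FirstCountableTopology (Fin d → Fin d → ℝ))
  refine (isLittleO_integral_mul_comp hKq (isLittleO_taylorRemainder₂ hf y) hρC (by positivity)
    htr hbound (Eventually.of_forall hmeas)).congr' ?_ EventuallyEq.rfl
  filter_upwards [self_mem_nhdsWithin, hbound] with H hH hHb
  rw [← kernel_bias_eq_integral_taylorRemainder₂ hK_int hK_prob hK_mean_int hK_mean
    hK_mom_int hK_mom (hDf y) (sq H) (integrable_mul_comp_of_sq_le hKq hρC (by positivity) hHb.1
      hHb.2 (hmeas H)), hsq_transpose H hH]

/-- Multivariate bias expansion for the kernel smoother: if `K` is a probability density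
on `ℝ^d` with mean zero and second-moment matrix `m₂(K) I_d`, and `f` is `C²` with
bounded uniformly continuous Hessian, then for fixed `y`, as symmetric positive definite
bandwidth matrices `H → 0` (with `H^{1/2}` a positive semidefinite square root of `H`),
`∫ K(w) f(y − H^{1/2} w) dw − f(y) = (1/2) m₂(K) tr(H · Hess f(y)) + o(tr H)`. -/
theorem multivariate_kernel_bias_expansion
    (d : ℕ) (K : (Fin d → ℝ) → ℝ) (hK_nonneg : ∀ w, 0 ≤ K w)
    (hK_int : Integrable K) (hK_prob : ∫ w, K w = 1)
    (hK_mean_int : ∀ i : Fin d, Integrable fun w : Fin d → ℝ => w i * K w)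
    (hK_mean : ∀ i : Fin d, (∫ w : Fin d → ℝ, w i * K w) = 0)
    (m₂ : ℝ)
    (hK_mom_int : ∀ i j : Fin d, Integrable fun w : Fin d → ℝ => w i * w j * K w)
    (hK_mom : ∀ i j : Fin d,
      (∫ w : Fin d → ℝ, w i * w j * K w) = if i = j then m₂ else 0)
    (f : (Fin d → ℝ) → ℝ) (hf : ContDiff ℝ 2 f)
    (hhess_bdd : ∃ C, ∀ y i j, |hessianMatrix f y i j| ≤ C)
    (hhess_uc : ∀ i j : Fin d, UniformContinuous fun y => hessianMatrix f y i j)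
    (sq : Matrix (Fin d) (Fin d) ℝ → Matrix (Fin d) (Fin d) ℝ)
    (hsq : ∀ H : Matrix (Fin d) (Fin d) ℝ, H.PosDef →
      (sq H).PosSemidef ∧ sq H * sq H = H)
    (y : Fin d → ℝ) :
    (fun H : Matrix (Fin d) (Fin d) ℝ =>
        (∫ w : Fin d → ℝ, K w * f (y - (sq H).mulVec w)) - f y -
          (1 / 2) * m₂ * (H * hessianMatrix f y).trace)
      =o[𝓝[{H : Matrix (Fin d) (Fin d) ℝ | H.PosDef}] 0]
        fun H : Matrix (Fin d) (Fin d) ℝ => H.trace :=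
  multivariate_kernel_bias_expansion_general d K hK_int hK_prob hK_mean_int hK_mean m₂ hK_mom_int
    hK_mom f hf hhess_bdd sq hsq y
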